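/- With the notation of the split values: setting σ_0 = -1 and σ_ℓ = n-1, for every q ∈ {0,...,ℓ-1}, the sum Σ_{j=σ_q+1}^{σ_{q+1}} x_j is at most 2d. That is, each block of the separation induced by the split values has total weight at most 2d. -/
import Mathlib


/-- Each block of the separation induced by the split values has total weight
at most `2d`.  Here `Y k = Σ_{j < k} x j` (so `Y (τ q)` plays the role of
`y_{σ_q}` with `τ q = σ_q + 1`, `τ 0 = 0` encoding `σ_0 = -1`, and
`τ ℓ = n` encoding `σ_ℓ = n-1`). -/
theorem split_blocks_weight_le (n ℓ d : ℕ) (x : ℕ → ℕ)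
    (hx : ∀ i < n, 0 < x i ∧ x i ≤ ℓ)
    (hld : ℓ ≤ d)
    (Y : ℕ → ℕ) (hY : ∀ k, Y k = ∑ j ∈ Finset.range k, x j)
    (htot : Y n ≤ d * ℓ)
    (τ : ℕ → ℕ)
    (hτ0 : τ 0 = 0) (hτℓ : τ ℓ = n)
    (hτ : ∀ q, 1 ≤ q → q ≤ ℓ - 1 →
      τ q ≤ n ∧ Y (τ q) ≤ q * d ∧ (τ q < n → q * d < Y (τ q + 1))) :
    ∀ q < ℓ, Y (τ (q + 1)) - Y (τ q) ≤ 2 * d := by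
  have Ymono : ∀ a b, a ≤ b → Y a ≤ Y b := by
    intro a b h
    rw [hY, hY]
    exact Finset.sum_le_sum_of_subset (Finset.range_subset_range.2 h)
  intro q hq
  by_cases h0 : q = 0
  · subst h0
    simp only [Nat.zero_add]
    have hY0 : Y (τ 0) = 0 := by rw [hτ0, hY]; simp
    rcases eq_or_lt_of_le (show 1 ≤ ℓ from hq) with he | hl
    · have : τ 1 = n := by rw [← he] at hτℓ; exact hτℓ
      have : Y (τ 1) ≤ d * ℓ := this ▸ htot
      have : d * ℓ = d := by rw [← he]; ring
      omega
    · have := (hτ 1 le_rfl (by omega)).2.1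
      simp at this
      omega
  · have hq1 : 1 ≤ q := Nat.one_le_iff_ne_zero.2 h0
    obtain ⟨hτqn, hYq, hgt⟩ := hτ q hq1 (by omega)
    by_cases hτqeq : τ q = n
    · have hle : τ (q + 1) ≤ n := by
        rcases eq_or_lt_of_le (show q + 1 ≤ ℓ from hq) with he | hl
        · rw [he, hτℓ]
        · exact (hτ (q + 1) (by omega) (by omega)).1
      have := Ymono (τ (q + 1)) (τ q) (hτqeq ▸ hle)
      omega
    · have hτqlt : τ q < n := lt_of_le_of_ne hτqn hτqeq
      have hx' := hx (τ q) hτqlt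
      have hY1 : Y (τ q + 1) = Y (τ q) + x (τ q) := by
        rw [hY, hY, Finset.sum_range_succ]
      have hlow : q * d < Y (τ q) + x (τ q) := hY1 ▸ hgt hτqlt
      have hxd : x (τ q) ≤ d := le_trans hx'.2 hld
      have hup : Y (τ (q + 1)) ≤ q * d + d := by
        rcases eq_or_lt_of_le (show q + 1 ≤ ℓ from hq) with he | hl
        · have h1 : Y (τ (q + 1)) ≤ d * ℓ := by rw [he, hτℓ]; exact htot
          have h2 : d * ℓ = q * d + d := by rw [← he]; ring
          omega
        · have := (hτ (q + 1) (by omega) (by omega)).2.1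
          have h2 : (q + 1) * d = q * d + d := by ring
          omega
      omega
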